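/- arXiv:2406.09283 — 4 statements merged into one kernel-verified Lean document; each statement's English description precedes it below -/
import Mathlib

section
/- Let R be a commutative ring, let a, b ∈ R, and let m, n ≥ 1 be integers. Then there exist polynomials F, G ∈ R[X] such that (X − a)^m · F(X) + (X − b)^n · G(X) = (a − b)^{m+n−1} (as polynomials, i.e. the right-hand side is the constant polynomial). -/
/-- Resultant identity: `(X−a)^m F + (X−b)^n G = (a−b)^{m+n−1}`. -/
theorem stmt1 {R : Type*} [CommRing R] (a b : R) (m n : ℕ) (hm : 1 ≤ m) (hn : 1 ≤ n) :
    ∃ F G : Polynomial R,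
      (Polynomial.X - Polynomial.C a) ^ m * F + (Polynomial.X - Polynomial.C b) ^ n * G
        = Polynomial.C ((a - b) ^ (m + n - 1)) := by
  have key : Polynomial.C ((a - b) ^ (m + n - 1)) ∈
      Ideal.span ({(Polynomial.X - Polynomial.C a) ^ m,
        (Polynomial.X - Polynomial.C b) ^ n} : Set (Polynomial R)) := by
    have h : Polynomial.C ((a - b) ^ (m + n - 1)) =
        (-(Polynomial.X - Polynomial.C a) + (Polynomial.X - Polynomial.C b)) ^ (m + n - 1) := by
      ring_nf
      rw [map_pow, map_sub]
    rw [h, add_pow]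
    apply Ideal.sum_mem
    intro k hk
    rcases le_or_gt m k with hkm | hkm
    · have : (-(Polynomial.X - Polynomial.C a)) ^ k =
          (-(Polynomial.X - Polynomial.C a)) ^ (k - m) * (Polynomial.X - Polynomial.C a) ^ m *
            (-1 : Polynomial R) ^ m := by
        rw [mul_assoc, ← mul_pow]
        simp [← pow_add, Nat.sub_add_cancel hkm]
      rw [this]
      exact Ideal.mul_mem_right _ _ (Ideal.mul_mem_right _ _ (Ideal.mul_mem_right _ _
        (Ideal.mul_mem_left _ _ (Ideal.subset_span (Set.mem_insert _ _)))))
    · have hkn : n ≤ m + n - 1 - k := by omega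
      have : (Polynomial.X - Polynomial.C b) ^ (m + n - 1 - k) =
          (Polynomial.X - Polynomial.C b) ^ (m + n - 1 - k - n) *
            (Polynomial.X - Polynomial.C b) ^ n := by
        rw [← pow_add, Nat.sub_add_cancel hkn]
      rw [this]
      apply Ideal.mul_mem_right
      rw [← mul_assoc]
      exact Ideal.mul_mem_left _ _
        (Ideal.subset_span (Set.mem_insert_of_mem _ rfl))
  rw [Ideal.mem_span_pair] at key
  obtain ⟨F, G, hFG⟩ := key
  exact ⟨F, G, by rw [mul_comm ((Polynomial.X - Polynomial.C a) ^ m) F,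
    mul_comm ((Polynomial.X - Polynomial.C b) ^ n) G]; exact hFG⟩
end

section
/- Let R be a commutative ring, A an (associative, unital) R-algebra that is finitely generated as a module over its center Z(A), and R' a flat commutative R-algebra. Then the natural map Z(A) ⊗_R R' → Z(A ⊗_R R') is an isomorphism onto the center of A ⊗_R R'. -/
open scoped TensorProduct

/-- For an `R`-algebra `A` finite over its centre and a flat commutative `R`-algebra `R'`,
the natural map `Z(A) ⊗[R] R' → A ⊗[R] R'` is injective with image the centre of
`A ⊗[R] R'`. -/
theorem stmt3 {R A R' : Type*} [CommRing R] [Ring A] [Algebra R A]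
    [CommRing R'] [Algebra R R'] [Module.Flat R R']
    [Module.Finite (Subalgebra.center R A) A] :
    Function.Injective
      (Algebra.TensorProduct.map (Subalgebra.center R A).val (AlgHom.id R R')) ∧
    ((Algebra.TensorProduct.map (Subalgebra.center R A).val (AlgHom.id R R')).range :
        Set (A ⊗[R] R')) = Set.center (A ⊗[R] R') := by
  classical
  set Z := Subalgebra.center R A
  set j : Z →ₗ[R] A := (Z.val).toLinearMap with hj
  obtain ⟨s, hs⟩ := Module.Finite.fg_top (R := Z) (M := A)
  set L : A →ₗ[R] (s → A) :=
    LinearMap.pi (fun i => LinearMap.mulLeft R (i : A) - LinearMap.mulRight R (i : A)) with hL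
  have hmap : ⇑(Algebra.TensorProduct.map Z.val (AlgHom.id R R')) = ⇑(j.rTensor R') := by
    ext x
    refine x.induction_on rfl (fun z r => rfl) (fun a b ha hb => ?_)
    simp_all [map_add]
  have hexact : Function.Exact j L := by
    intro a
    constructor
    · intro h
      have hc : ∀ i : s, (i : A) * a = a * (i : A) := by
        intro i
        have := congrFun h i
        simpa [hL, sub_eq_zero] using this
      have hcen : a ∈ Z := by
        rw [Subalgebra.mem_center_iff]
        intro b
        have hb : b ∈ Submodule.span Z (s : Set A) := hs ▸ Submodule.mem_top
        induction hb using Submodule.span_induction with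
        | mem x hx => exact hc ⟨x, hx⟩
        | zero => simp
        | add x y _ _ hx hy => rw [add_mul, mul_add, hx, hy]
        | smul z x _ hx =>
            have hz := z.2
            rw [Subalgebra.mem_center_iff] at hz
            show (z.1 * x) * a = a * (z.1 * x)
            rw [mul_assoc, hx, ← mul_assoc, ← hz a, mul_assoc]
      exact ⟨⟨a, hcen⟩, rfl⟩
    · rintro ⟨z, rfl⟩
      have hz := z.2
      rw [Subalgebra.mem_center_iff] at hz
      ext i
      simp [hL, hj, hz]
  have hexact' : Function.Exact (j.rTensor R') (L.rTensor R') :=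
    Module.Flat.rTensor_exact R' hexact
  -- elements of the form z ⊗ r are central
  have hcentral : ∀ (y : Z ⊗[R] R'), (j.rTensor R') y ∈ Set.center (A ⊗[R] R') := by
    intro y
    rw [Semigroup.mem_center_iff]
    intro g
    refine y.induction_on ?_ (fun z r => ?_) (fun a b ha hb => ?_)
    · rw [LinearMap.map_zero, mul_zero, zero_mul]
    · show g * (z.1 ⊗ₜ[R] r) = (z.1 ⊗ₜ[R] r) * g
      have hz := z.2
      rw [Subalgebra.mem_center_iff] at hz
      refine g.induction_on ?_ (fun a r' => ?_) (fun a b ha hb => ?_)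
      · simp
      · simp [Algebra.TensorProduct.tmul_mul_tmul, hz, mul_comm r r']
      · rw [add_mul, mul_add, ha, hb]
    · rw [map_add, add_mul, mul_add, ha, hb]
  -- the componentwise description of L.rTensor
  set e : ((s → A) ⊗[R] R') ≃ₗ[R] (s → A ⊗[R] R') :=
    (TensorProduct.comm R _ R').trans ((TensorProduct.piRight R R R' (fun _ : s => A)).trans
      (LinearEquiv.piCongrRight fun _ => TensorProduct.comm R R' A)) with he
  have hcomp : ∀ (w : A ⊗[R] R') (i : s),
      e (L.rTensor R' w) i = ((i : A) ⊗ₜ[R] (1 : R')) * w - w * ((i : A) ⊗ₜ[R] (1 : R')) := by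
    intro w i
    refine w.induction_on ?_ (fun a r => ?_) (fun a b ha hb => ?_)
    · rw [LinearMap.map_zero, LinearEquiv.map_zero, Pi.zero_apply, mul_zero, zero_mul, sub_zero]
    · simp [he, hL, TensorProduct.piRight_apply, Algebra.TensorProduct.tmul_mul_tmul,
        TensorProduct.sub_tmul, LinearMap.rTensor_tmul, mul_sub, sub_mul]
    · simp only [map_add, Pi.add_apply, ha, hb, mul_add, add_mul]
      abel
  constructor
  · rw [hmap]
    exact Module.Flat.rTensor_preserves_injective_linearMap j Subtype.val_injective
  · apply le_antisymm
    · rintro x ⟨y, rfl⟩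
      have := hcentral y
      rw [← hmap] at this
      exact this
    · intro x hx
      rw [Semigroup.mem_center_iff] at hx
      have hker : L.rTensor R' x = 0 := by
        have : e (L.rTensor R' x) = 0 := by
          funext i
          rw [hcomp x i, hx ((i : A) ⊗ₜ[R] (1 : R')), sub_self]
          rfl
        exact e.map_eq_zero_iff.mp this
      obtain ⟨y, hy⟩ := (hexact' x).mp hker
      refine ⟨y, ?_⟩
      show (Algebra.TensorProduct.map Z.val (AlgHom.id R R')) y = x
      rw [hmap]; exact hy
end

section
/- Let R be a Noetherian commutative ring, (M_i)_{i ∈ ι} a family of flat R-modules, and R' a flat commutative R-algebra. Then the natural map (∏_{i ∈ ι} M_i) ⊗_R R' → ∏_{i ∈ ι} (M_i ⊗_R R') is injective. -/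
/-!
Write `P = ∏ i, M i` and `Φ_N : P ⊗ N → ∏ i, M i ⊗ N`. For finite free `N`, `Φ_N` is an
isomorphism, since both sides are finite powers of `P`. If `N` is finitely presented, choose a
presentation `R^m → R^n → N → 0`; it stays exact after tensoring with `P` or with any `M i`, and a
diagram chase through the isomorphisms `Φ_{R^m}`, `Φ_{R^n}` shows that `Φ_N` is injective. For
arbitrary `N`, every `x : P ⊗ N` comes from `P ⊗ N'` for a finitely generated `N' ≤ N`, which is
finitely presented because `R` is Noetherian; flatness of the `M i` makes `M i ⊗ N' → M i ⊗ N`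
injective, so `Φ_N x = 0` forces `Φ_{N'} x' = 0` and hence `x = 0`.
-/

open TensorProduct LinearMap

namespace TensorProduct

variable (R : Type*) [CommRing R] {ι : Type*} (M : ι → Type*) [∀ i, AddCommGroup (M i)]
  [∀ i, Module R (M i)]

def piLeftHom (N : Type*) [AddCommGroup N] [Module R N] :
    (∀ i, M i) ⊗[R] N →ₗ[R] ∀ i, M i ⊗[R] N :=
  LinearMap.pi fun i => (proj i).rTensor N

variable {R M}

@[simp]
lemma piLeftHom_tmul {N : Type*} [AddCommGroup N] [Module R N] (m : ∀ i, M i) (n : N) :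
    piLeftHom R M N (m ⊗ₜ n) = fun i => m i ⊗ₜ n :=
  rfl

lemma piLeftHom_lTensor {N₁ N₂ : Type*} [AddCommGroup N₁] [Module R N₁] [AddCommGroup N₂]
    [Module R N₂] (g : N₁ →ₗ[R] N₂) (x : (∀ i, M i) ⊗[R] N₁) (i : ι) :
    piLeftHom R M N₂ (g.lTensor _ x) i = g.lTensor (M i) (piLeftHom R M N₁ x i) := by
  induction x using TensorProduct.induction_on <;> simp_all [piLeftHom]

variable (R M)

lemma piLeftHom_bijective_of_finite (κ : Type*) [Finite κ] :
    Function.Bijective (piLeftHom R M (κ → R)) := by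
  cases nonempty_fintype κ
  classical
  let e := LinearEquiv.piCongrRight fun i => piScalarRight R R (M i) κ
  have swap_apply (x) (i : ι) (p : κ) :
      e (piLeftHom R M (κ → R) x) i p = piScalarRight R R (∀ i, M i) κ x p i := by
    induction x using TensorProduct.induction_on <;> simp_all [e]
  have key : ⇑(piLeftHom R M (κ → R)) =
      e.symm ∘ Equiv.piComm _ ∘ piScalarRight R R (∀ i, M i) κ := by
    funext x
    apply e.injective
    ext i p
    simp [swap_apply]
  rw [key]
  exact e.symm.bijective.comp ((Equiv.piComm _).bijective.comp (LinearEquiv.bijective _))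

lemma piLeftHom_injective_of_finitePresentation (N : Type*) [AddCommGroup N] [Module R N]
    [Module.FinitePresentation R N] : Function.Injective (piLeftHom R M N) := by
  obtain ⟨n, m, f, g, hf, hgf⟩ := Module.FinitePresentation.exists_fin' R N
  rw [injective_iff_map_eq_zero]
  intro x hx
  obtain ⟨z, rfl⟩ := lTensor_surjective _ hf x
  have hz (i : ι) : piLeftHom R M _ z i ∈ range (g.lTensor (M i)) := by
    rw [← (lTensor_exact (M i) hgf hf).linearMap_ker_eq, mem_ker, ← piLeftHom_lTensor, hx,
      Pi.zero_apply]
  choose w hw using hz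
  obtain ⟨w', rfl⟩ := (piLeftHom_bijective_of_finite R M (Fin m)).surjective w
  have : g.lTensor _ w' = z := (piLeftHom_bijective_of_finite R M (Fin n)).injective <| by
    funext i
    rw [piLeftHom_lTensor, hw]
  rw [← this]
  exact (lTensor_exact _ hgf hf).apply_apply_eq_zero w'

lemma piLeftHom_injective_of_flat [IsNoetherianRing R] [∀ i, Module.Flat R (M i)]
    (N : Type*) [AddCommGroup N] [Module R N] : Function.Injective (piLeftHom R M N) := by
  rw [injective_iff_map_eq_zero]
  intro x hx
  obtain ⟨N', _, hN'⟩ := exists_finite_submodule_right_of_setFinite {x} (Set.finite_singleton x)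
  obtain ⟨x', rfl⟩ := hN' rfl
  have : Module.FinitePresentation R N' := Module.finitePresentation_of_finite R N'
  have hx' : x' = 0 := piLeftHom_injective_of_finitePresentation R M N' <| by
    funext i
    rw [map_zero, Pi.zero_apply]
    apply Module.Flat.lTensor_preserves_injective_linearMap _ N'.injective_subtype
    rw [← piLeftHom_lTensor, hx, Pi.zero_apply, map_zero]
  rw [hx', map_zero]

end TensorProduct

theorem stmt4_general {R R' ι : Type*} [CommRing R] [IsNoetherianRing R]
    [CommRing R'] [Algebra R R']
    (M : ι → Type*) [∀ i, AddCommGroup (M i)] [∀ i, Module R (M i)]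
    [∀ i, Module.Flat R (M i)] :
    Function.Injective
      (LinearMap.pi (fun i => TensorProduct.map (LinearMap.proj i) LinearMap.id) :
        ((∀ i, M i) ⊗[R] R') →ₗ[R] ∀ i, (M i ⊗[R] R')) :=
  piLeftHom_injective_of_flat R M R'

/-- Over a Noetherian ring, tensoring a product of flat modules with a flat algebra
injects into the product of the tensor products. -/
theorem stmt4 {R R' ι : Type*} [CommRing R] [IsNoetherianRing R]
    [CommRing R'] [Algebra R R'] [Module.Flat R R']
    (M : ι → Type*) [∀ i, AddCommGroup (M i)] [∀ i, Module R (M i)]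
    [∀ i, Module.Flat R (M i)] :
    Function.Injective
      (LinearMap.pi (fun i => TensorProduct.map (LinearMap.proj i) LinearMap.id) :
        ((∀ i, M i) ⊗[R] R') →ₗ[R] ∀ i, (M i ⊗[R] R')) :=
  stmt4_general M
end

section
/- Let R be a Noetherian commutative ring and (M_i)_{i ∈ ι} a family of flat R-modules. Then the product module ∏_{i ∈ ι} M_i is a flat R-module. -/
/-!
By the equational criterion, flatness means every relation `∑ fᵢ xᵢ = 0` is trivial, i.e. `x`
factors as `x = a y` through a matrix `a` whose columns are syzygies of `f`. Over a Noetherian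
ring the syzygies of `f` are spanned by finitely many `c₁, …, c_p`, so in each factor `M t` the
relation factors through the same matrix `(c₁ ⋯ c_p)`; the factorisations of the components then
assemble into one for the product.
-/

open Module

section

variable {R : Type*} [CommRing R] {ι : Type*} [Fintype ι] {f : ι → R}

lemma Module.IsTrivialRelation.exists_eq_sum_smul_of_ker_le_span {M : Type*} [AddCommGroup M]
    [Module R M] {p : ℕ} {c : Fin p → ι → R}
    (hc : LinearMap.ker (Fintype.linearCombination R f) ≤ Submodule.span R (Set.range c))
    {x : ι → M} (hx : IsTrivialRelation f x) : ∃ y : Fin p → M, ∀ i, x i = ∑ q, c q i • y q := by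
  obtain ⟨k, a, y, hxy, ha⟩ := hx
  have hcol : ∀ j, ∃ b : Fin p → R, ∑ q, b q • c q = fun i => a i j := fun j =>
    (Submodule.mem_span_range_iff_exists_fun R).mp <| hc <| by
      simpa [Fintype.linearCombination_apply, mul_comm] using ha j
  choose b hb using hcol
  have hab : ∀ i j, a i j = ∑ q, b j q * c q i := fun i j => by
    simpa using (congr_fun (hb j) i).symm
  refine ⟨fun q => ∑ j, b j q • y j, fun i => ?_⟩
  calc x i = ∑ j, (∑ q, b j q * c q i) • y j := by simp only [hxy, hab]
    _ = ∑ q, c q i • ∑ j, b j q • y j := by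
        simp only [Finset.sum_smul, Finset.smul_sum, smul_smul, mul_comm]
        exact Finset.sum_comm

lemma Module.Flat.isTrivialRelation_pi_of_fg_ker {κ : Type*} {M : κ → Type*}
    [∀ t, AddCommGroup (M t)] [∀ t, Module R (M t)] [∀ t, Flat R (M t)]
    (hf : (LinearMap.ker (Fintype.linearCombination R f)).FG)
    {x : ι → ∀ t, M t} (hx : ∑ i, f i • x i = 0) : IsTrivialRelation f x := by
  obtain ⟨p, c, hc⟩ := Submodule.fg_iff_exists_fin_generating_family.mp hf
  have hcomp : ∀ t, ∃ y : Fin p → M t, ∀ i, x i t = ∑ q, c q i • y q := fun t =>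
    (isTrivialRelation_of_sum_smul_eq_zero (by simpa using congr_fun hx t)
      ).exists_eq_sum_smul_of_ker_le_span hc.ge
  choose y hy using hcomp
  refine ⟨p, fun i q => c q i, fun q t => y t q, fun i => funext fun t => by simpa using hy t i,
    fun q => ?_⟩
  have hcq : c q ∈ LinearMap.ker (Fintype.linearCombination R f) :=
    hc ▸ Submodule.subset_span (Set.mem_range_self q)
  simpa [Fintype.linearCombination_apply, mul_comm] using hcq

theorem Module.Flat.pi_of_forall_fg_ker {κ : Type*} {M : κ → Type*}
    [∀ t, AddCommGroup (M t)] [∀ t, Module R (M t)] [∀ t, Flat R (M t)]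
    (hR : ∀ {l : ℕ} (f : Fin l → R), (LinearMap.ker (Fintype.linearCombination R f)).FG) :
    Flat R (∀ t, M t) :=
  of_forall_isTrivialRelation fun hx => isTrivialRelation_pi_of_fg_ker (hR _) hx

end

/-- Over a Noetherian ring, an arbitrary product of flat modules is flat. -/
theorem stmt5 {R ι : Type*} [CommRing R] [IsNoetherianRing R]
    (M : ι → Type*) [∀ i, AddCommGroup (M i)] [∀ i, Module R (M i)]
    [∀ i, Module.Flat R (M i)] : Module.Flat R (∀ i, M i) :=
  Flat.pi_of_forall_fg_ker fun _ => IsNoetherian.noetherian _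
end
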